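/- arXiv:2004.01696 — 2 statements merged into one kernel-verified Lean document; each statement's English description precedes it below -/
import Mathlib

section
/- Let T be a spherically homogeneous rooted tree, let G ≤ Aut(T) be a weakly branch group, let k ∈ ℕ, and let H ≤ G be a k-subnormal subgroup of G. If v is a vertex of T that is not stabilised by H (i.e. hv ≠ v for some h ∈ H), then rist_G(v)^(k) ≤ H. -/
open Equiv

namespace PaperDefs


/-! ### Spherically homogeneous rooted trees -/

variable (A : ℕ → Type)

/-- Vertices of the spherically homogeneous rooted tree determined by the
sequence of alphabets `A`: words `a₁a₂⋯aₙ` with `aᵢ ∈ A i`. -/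
def Vertex : Type := Σ n : ℕ, ∀ i : Fin n, A i

/-- The prefix relation on vertices. -/
def IsPref (v w : Vertex A) : Prop :=
  ∃ h : v.1 ≤ w.1, ∀ i : Fin v.1, v.2 i = w.2 (Fin.castLE h i)

/-- The automorphism group of the tree: permutations of the vertex set that
preserve the prefix relation. -/
def treeAut : Subgroup (Perm (Vertex A)) where
  carrier := {g | ∀ v w, IsPref A v w ↔ IsPref A (g v) (g w)}
  one_mem' := by intro v w; simp
  mul_mem' := by
    intro a b ha hb v w
    simpa [Equiv.Perm.mul_apply] using (hb v w).trans (ha (b v) (b w))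
  inv_mem' := by
    intro a ha v w
    simpa using (ha (a⁻¹ v) (a⁻¹ w)).symm

/-- The stabiliser of the vertex `v` in `G`. -/
def stG (G : Subgroup (Perm (Vertex A))) (v : Vertex A) : Subgroup (Perm (Vertex A)) :=
  G ⊓ MulAction.stabilizer (Perm (Vertex A)) v

/-- The rigid stabiliser of the vertex `v` in `G`: elements of `G` fixing every
vertex that does not have `v` as a prefix. -/
def rist (G : Subgroup (Perm (Vertex A))) (v : Vertex A) : Subgroup (Perm (Vertex A)) where
  carrier := {g | g ∈ G ∧ ∀ w, ¬ IsPref A v w → g w = w}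
  one_mem' := ⟨G.one_mem, fun w _ => by simp⟩
  mul_mem' := by
    rintro a b ⟨haG, ha⟩ ⟨hbG, hb⟩
    refine ⟨G.mul_mem haG hbG, fun w hw => ?_⟩
    simp [Equiv.Perm.mul_apply, hb w hw, ha w hw]
  inv_mem' := by
    rintro a ⟨haG, ha⟩
    refine ⟨G.inv_mem haG, fun w hw => ?_⟩
    conv_lhs => rw [← ha w hw]
    simp

/-- The rigid stabiliser of the `n`-th level: the subgroup generated by the rigid
stabilisers of the vertices of level `n`. -/
def ristLevel (G : Subgroup (Perm (Vertex A))) (n : ℕ) : Subgroup (Perm (Vertex A)) :=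
  ⨆ (v : Vertex A) (_ : v.1 = n), rist A G v

/-- `G` acts spherically transitively: transitively on every level. -/
def SphTrans (G : Subgroup (Perm (Vertex A))) : Prop :=
  ∀ v w : Vertex A, v.1 = w.1 → ∃ g ∈ G, g v = w

/-- `G ≤ Aut T` is a weakly branch group. -/
def IsWeaklyBranch (G : Subgroup (Perm (Vertex A))) : Prop :=
  G ≤ treeAut A ∧ SphTrans A G ∧ ∀ v : Vertex A, rist A G v ≠ ⊥

/-- `G ≤ Aut T` is a branch group. -/
def IsBranch (G : Subgroup (Perm (Vertex A))) : Prop :=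
  IsWeaklyBranch A G ∧ ∀ n : ℕ, (ristLevel A G n).relIndex G ≠ 0

/-! ### Boundary of the tree -/

/-- The boundary of the tree: infinite words. -/
def Boundary : Type := ∀ i : ℕ, A i

/-- The length-`n` prefix of a boundary point. -/
def bdryPrefix (ξ : Boundary A) (n : ℕ) : Vertex A := ⟨n, fun i => ξ i⟩

/-- The support of a subgroup `H` on the boundary: boundary points moved by some
element of `H` (a boundary point is moved by a tree automorphism iff one of its
finite prefixes is moved). -/
def supp (H : Subgroup (Perm (Vertex A))) : Set (Boundary A) :=
  {ξ | ∃ h ∈ H, ∃ n : ℕ, h (bdryPrefix A ξ n) ≠ bdryPrefix A ξ n}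

/-! ### Sections / projections -/

/-- The shifted alphabet sequence, describing the subtree rooted at a vertex of
level `n`. -/
def shift (n : ℕ) : ℕ → Type := fun i => A (i + n)

/-- Concatenation of a vertex `v` of level `n` with a vertex of the subtree `T_v`
(viewed in the shifted tree). -/
def concat (n : ℕ) (v : Vertex A) (hv : v.1 = n) (w : Vertex (shift A n)) : Vertex A :=
  ⟨n + w.1, fun i =>
    if h : (i : ℕ) < n then v.2 ⟨(i : ℕ), by omega⟩
    else cast (congrArg A (by have := i.isLt; omega : (i : ℕ) - n + n = (i : ℕ)))
      (w.2 ⟨(i : ℕ) - n, by have := i.isLt; omega⟩)⟩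

/-- `projStab A G n v hv` is `G_v = φ_v(St_G(v))`, the image under the projection
`φ_v` of the stabiliser of `v` in `G`, realised as a subgroup of the automorphisms
of the subtree `T_v` (identified with the tree on the shifted alphabet sequence):
it consists of those `σ` for which some `g ∈ G` stabilises `v` and satisfies
`g (v·w) = v·(σ w)` for every vertex `w` of the subtree. -/
def projStab (G : Subgroup (Perm (Vertex A))) (n : ℕ) (v : Vertex A) (hv : v.1 = n) :
    Subgroup (Perm (Vertex (shift A n))) where
  carrier := {σ | ∃ g ∈ G, g v = v ∧ ∀ w, g (concat A n v hv w) = concat A n v hv (σ w)}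
  one_mem' := ⟨1, G.one_mem, by simp, fun w => by simp⟩
  mul_mem' := by
    rintro σ τ ⟨g, hgG, hgv, hg⟩ ⟨g', hg'G, hg'v, hg'⟩
    refine ⟨g * g', G.mul_mem hgG hg'G, by simp [Equiv.Perm.mul_apply, hg'v, hgv], fun w => ?_⟩
    simp [Equiv.Perm.mul_apply, hg' w, hg (τ w)]
  inv_mem' := by
    rintro σ ⟨g, hgG, hgv, hg⟩
    refine ⟨g⁻¹, G.inv_mem hgG, by simpa using (congrArg (⇑g⁻¹) hgv).symm, fun w => ?_⟩
    have h1 : g (concat A n v hv (σ⁻¹ w)) = concat A n v hv w := by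
      rw [hg (σ⁻¹ w)]; simp
    calc g⁻¹ (concat A n v hv w) = g⁻¹ (g (concat A n v hv (σ⁻¹ w))) := by rw [h1]
      _ = concat A n v hv (σ⁻¹ w) := by simp

/-! ### Group-theoretic notions -/

/-- `H` is a normal subgroup of `K` (both being subgroups of an ambient group). -/
def NormalIn {P : Type*} [Group P] (H K : Subgroup P) : Prop :=
  H ≤ K ∧ ∀ k ∈ K, ∀ h ∈ H, k * h * k⁻¹ ∈ H

/-- `H` is `k`-subnormal in `G`: there is a chain `H = c k ⊴ ⋯ ⊴ c 0 = G`. -/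
def SubnormalIn {P : Type*} [Group P] (H G : Subgroup P) (k : ℕ) : Prop :=
  ∃ c : ℕ → Subgroup P, c 0 = G ∧ c k = H ∧ ∀ i < k, NormalIn (c (i + 1)) (c i)

/-- The iterated derived subgroup `H⁽ᵏ⁾` of a subgroup `H` of an ambient group. -/
def derivedIter {P : Type*} [Group P] (H : Subgroup P) : ℕ → Subgroup P
  | 0 => H
  | k + 1 => ⁅derivedIter H k, derivedIter H k⁆

/-- The class `𝓜𝓕` of groups all of whose maximal subgroups have finite index. -/
def MF (Γ : Type*) [Group Γ] : Prop :=
  ∀ M : Subgroup Γ, IsCoatom M → M.index ≠ 0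

/-- Every proper quotient of `Γ` belongs to `𝓜𝓕`. -/
def QuotientsMF (Γ : Type*) [Group Γ] : Prop :=
  ∀ (N : Subgroup Γ) [N.Normal], N ≠ ⊥ → MF (Γ ⧸ N)

/-- `H` is a prodense subgroup of `Γ`: `HN = Γ` for every nontrivial normal `N ⊴ Γ`. -/
def Prodense {Γ : Type*} [Group Γ] (H : Subgroup Γ) : Prop :=
  ∀ N : Subgroup Γ, N.Normal → N ≠ ⊥ → H ⊔ N = ⊤

/-- `H` is a prodense subgroup of `G`, both being subgroups of an ambient group:
`H ≤ G` and `HN = G` for every nontrivial subgroup `N ≤ G` normal in `G`. -/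
def ProdenseIn {P : Type*} [Group P] (H G : Subgroup P) : Prop :=
  H ≤ G ∧ ∀ N : Subgroup P, N ≤ G → NormalIn N G → N ≠ ⊥ → H ⊔ N = G

/-- `M` is a maximal subgroup of `G` (both subgroups of an ambient group). -/
def MaximalIn {P : Type*} [Group P] (M G : Subgroup P) : Prop :=
  M < G ∧ ∀ K : Subgroup P, M < K → K ≤ G → K = G


/-! ### Auxiliary lemmas -/

section Aux

variable {A}

lemma mem_treeAut_iff {g : Perm (Vertex A)} :
    g ∈ treeAut A ↔ ∀ v w, IsPref A v w ↔ IsPref A (g v) (g w) := Iff.rfl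

lemma mem_rist_iff {G : Subgroup (Perm (Vertex A))} {v : Vertex A} {g : Perm (Vertex A)} :
    g ∈ rist A G v ↔ g ∈ G ∧ ∀ w, ¬ IsPref A v w → g w = w := Iff.rfl

lemma isPref_refl (v : Vertex A) : IsPref A v v :=
  ⟨le_rfl, fun _ => rfl⟩

lemma isPref_eq_of_len {u u' w : Vertex A} (h1 : IsPref A u w) (h2 : IsPref A u' w)
    (hl : u.1 = u'.1) : u = u' := by
  obtain ⟨l1, h1⟩ := h1
  obtain ⟨l2, h2⟩ := h2
  obtain ⟨n, f⟩ := u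
  obtain ⟨n', f'⟩ := u'
  dsimp at hl h1 h2
  subst hl
  congr 1
  funext i
  rw [h1 i, h2 i]

/-- The prefixes of `v` are in bijection with `Fin (v.1 + 1)`. -/
def prefEquiv (v : Vertex A) : {w : Vertex A // IsPref A w v} ≃ Fin (v.1 + 1) where
  toFun w := ⟨w.1.1, by obtain ⟨hle, _⟩ := w.2; omega⟩
  invFun m := ⟨⟨m.1, fun i => v.2 (Fin.castLE (Nat.le_of_lt_succ m.2) i)⟩,
    ⟨Nat.le_of_lt_succ m.2, fun _ => rfl⟩⟩
  left_inv := by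
    rintro ⟨w, hw⟩
    apply Subtype.ext
    obtain ⟨hle, hf⟩ := hw
    exact isPref_eq_of_len ⟨hle, fun _ => rfl⟩ ⟨hle, hf⟩ rfl
  right_inv m := rfl

lemma treeAut_len {g : Perm (Vertex A)} (hg : g ∈ treeAut A) (v : Vertex A) :
    (g v).1 = v.1 := by
  have e1 : {w : Vertex A // IsPref A w v} ≃ {w : Vertex A // IsPref A w (g v)} :=
    { toFun := fun w => ⟨g w.1, ((mem_treeAut_iff.mp hg) w.1 v).mp w.2⟩
      invFun := fun u => ⟨g⁻¹ u.1, by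
        have := ((mem_treeAut_iff.mp hg) (g⁻¹ u.1) v).mpr
        apply this
        simpa using u.2⟩
      left_inv := by rintro ⟨w, hw⟩; apply Subtype.ext; simp
      right_inv := by rintro ⟨u, hu⟩; apply Subtype.ext; simp }
  have e2 : Fin (v.1 + 1) ≃ Fin ((g v).1 + 1) :=
    (prefEquiv v).symm.trans (e1.trans (prefEquiv (g v)))
  have := Fin.equiv_iff_eq.mp ⟨e2⟩
  omega

lemma rist_fix_vertex {G : Subgroup (Perm (Vertex A))} (hGA : G ≤ treeAut A)
    {v : Vertex A} {s : Perm (Vertex A)} (hs : s ∈ rist A G v) : s v = v := by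
  obtain ⟨hsG, hsfix⟩ := mem_rist_iff.mp hs
  by_contra hne
  have hlen : (s v).1 = v.1 := treeAut_len (hGA hsG) v
  have hnp : ¬ IsPref A v (s v) := fun hp =>
    hne (isPref_eq_of_len (isPref_refl (s v)) hp hlen)
  obtain ⟨_, hifix⟩ := mem_rist_iff.mp ((rist A G v).inv_mem hs)
  have := hifix (s v) hnp
  rw [show s⁻¹ (s v) = v from s.symm_apply_apply v] at this
  exact hne this.symm

lemma rist_pref {G : Subgroup (Perm (Vertex A))} (hGA : G ≤ treeAut A)
    {v w : Vertex A} {s : Perm (Vertex A)} (hs : s ∈ rist A G v)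
    (hw : IsPref A v w) : IsPref A v (s w) := by
  have h := (mem_treeAut_iff.mp (hGA (mem_rist_iff.mp hs).1)) v w
  rw [rist_fix_vertex hGA hs] at h
  exact h.mp hw

lemma rist_conj_commute {G : Subgroup (Perm (Vertex A))} (hGA : G ≤ treeAut A)
    {v : Vertex A} {h r s : Perm (Vertex A)}
    (hh : h ∈ G) (hhv : h v ≠ v) (hr : r ∈ rist A G v) (hs : s ∈ rist A G v) :
    (h * r * h⁻¹) * s = s * (h * r * h⁻¹) := by
  obtain ⟨hrG, hrfix⟩ := mem_rist_iff.mp hr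
  obtain ⟨hsG, hsfix⟩ := mem_rist_iff.mp hs
  have hAut := mem_treeAut_iff.mp (hGA hh)
  have hlen : (h v).1 = v.1 := treeAut_len (hGA hh) v
  have incompat : ∀ u, IsPref A v u → IsPref A (h v) u → False := fun u h1 h2 =>
    hhv (isPref_eq_of_len h2 h1 hlen)
  have bfix : ∀ u, ¬ IsPref A (h v) u → (h * r * h⁻¹) u = u := by
    intro u hu
    have h1 : ¬ IsPref A v (h⁻¹ u) := by
      intro h2
      exact hu (by simpa using (hAut v (h⁻¹ u)).mp h2)
    rw [Perm.mul_apply, Perm.mul_apply, hrfix _ h1]; simp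
  have bpref : ∀ u, IsPref A (h v) u → IsPref A (h v) ((h * r * h⁻¹) u) := by
    intro u hu
    have h1 : IsPref A v (h⁻¹ u) := by
      have := (hAut v (h⁻¹ u)).mpr
      apply this; simpa using hu
    have h2 : IsPref A v (r (h⁻¹ u)) := rist_pref hGA hr h1
    have := (hAut v (r (h⁻¹ u))).mp h2
    simpa [Perm.mul_apply] using this
  ext w
  simp only [Perm.mul_apply]
  by_cases hp : IsPref A v w
  · have h1 : ¬ IsPref A (h v) w := fun h2 => incompat w hp h2
    have h2 : IsPref A v (s w) := rist_pref hGA hs hp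
    have h3 : ¬ IsPref A (h v) (s w) := fun h4 => incompat _ h2 h4
    have e1 : (h * r * h⁻¹) w = w := bfix w h1
    have e2 : (h * r * h⁻¹) (s w) = s w := bfix _ h3
    simp only [Perm.mul_apply] at e1 e2
    rw [e2, e1]
  · have hsw : s w = w := hsfix w hp
    by_cases hq : IsPref A (h v) w
    · have h1 : ¬ IsPref A v ((h * r * h⁻¹) w) := fun h2 =>
        incompat _ h2 (bpref w hq)
      have e1 : s ((h * r * h⁻¹) w) = (h * r * h⁻¹) w := hsfix _ h1
      simp only [Perm.mul_apply] at e1 ⊢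
      rw [hsw, e1]
    · have e1 : (h * r * h⁻¹) w = w := bfix w hq
      simp only [Perm.mul_apply] at e1 ⊢
      rw [hsw, e1, hsw]

lemma derivedIter_le_self {P : Type*} [Group P] (H : Subgroup P) (k : ℕ) :
    derivedIter H k ≤ H := by
  induction k with
  | zero => exact le_rfl
  | succ k ih =>
    refine le_trans ?_ ih
    show ⁅derivedIter H k, derivedIter H k⁆ ≤ derivedIter H k
    rw [Subgroup.commutator_le]
    intro r hr s hs
    rw [commutatorElement_def]
    exact mul_mem (mul_mem (mul_mem hr hs) (inv_mem hr)) (inv_mem hs)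

end Aux

/-- If `G` is a weakly branch group on a spherically homogeneous
rooted tree, `H` is a `k`-subnormal subgroup of `G`, and `v` is a vertex not
stabilised by `H`, then the `k`-th derived subgroup of `rist_G(v)` is contained
in `H`. -/
theorem derivedIter_rist_le_of_subnormal
    (A : ℕ → Type) [∀ i, Fintype (A i)] (hcard : ∀ i, 2 ≤ Fintype.card (A i))
    (G H : Subgroup (Perm (Vertex A))) (hG : IsWeaklyBranch A G)
    (k : ℕ) (hH : SubnormalIn H G k)
    (v : Vertex A) (hv : ∃ h ∈ H, h v ≠ v) :
    derivedIter (rist A G v) k ≤ H := by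
  obtain ⟨hGA, -, -⟩ := hG
  obtain ⟨c, hc0, hck, hnorm⟩ := hH
  obtain ⟨h₀, hh₀H, hh₀v⟩ := hv
  -- `H` is contained in every term of the chain.
  have hHle : ∀ i, i ≤ k → H ≤ c i := by
    intro i hi
    have key : ∀ d i, i + d = k → H ≤ c i := by
      intro d
      induction d with
      | zero => intro i hdi; have : i = k := by omega
                subst this; rw [hck]
      | succ d ih =>
        intro i hdi
        exact (ih (i + 1) (by omega)).trans (hnorm i (by omega)).1
    exact key (k - i) i (by omega)
  have hh₀G : h₀ ∈ G := by
    have := hHle 0 (Nat.zero_le k) hh₀H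
    rw [hc0] at this; exact this
  -- main induction along the subnormal chain
  have main : ∀ i, i ≤ k → derivedIter (rist A G v) i ≤ c i := by
    intro i
    induction i with
    | zero =>
      intro _
      rw [hc0]
      exact fun g hg => (mem_rist_iff.mp hg).1
    | succ i ih =>
      intro hik
      have hD := ih (by omega)
      have hrist := derivedIter_le_self (rist A G v) i
      show ⁅derivedIter (rist A G v) i, derivedIter (rist A G v) i⁆ ≤ c (i + 1)
      rw [Subgroup.commutator_le]
      intro r hr s hs
      have hrv : r ∈ rist A G v := hrist hr
      have hsv : s ∈ rist A G v := hrist hs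
      have hrK : r ∈ c i := hD hr
      have hsK : s ∈ c i := hD hs
      have hh₀N : h₀ ∈ c (i + 1) := hHle (i + 1) hik hh₀H
      have hnormi := (hnorm i (by omega)).2
      have hx : r * h₀ * r⁻¹ * h₀⁻¹ ∈ c (i + 1) := by
        have h1 : r * h₀ * r⁻¹ ∈ c (i + 1) := hnormi r hrK h₀ hh₀N
        exact mul_mem h1 (inv_mem hh₀N)
      set x := r * h₀ * r⁻¹ * h₀⁻¹ with hxdef
      have hy : x * (s * x⁻¹ * s⁻¹) ∈ c (i + 1) :=
        mul_mem hx (hnormi s hsK _ (inv_mem hx))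
      have hcomm : (h₀ * r⁻¹ * h₀⁻¹) * s = s * (h₀ * r⁻¹ * h₀⁻¹) :=
        rist_conj_commute hGA hh₀G hh₀v ((rist A G v).inv_mem hrv) hsv
      have hxb : x = r * (h₀ * r⁻¹ * h₀⁻¹) := by
        rw [hxdef]; group
      have hkey : r * s * r⁻¹ * s⁻¹ = x * (s * x⁻¹ * s⁻¹) := by
        rw [hxb]
        rw [show r * (h₀ * r⁻¹ * h₀⁻¹) * (s * (r * (h₀ * r⁻¹ * h₀⁻¹))⁻¹ * s⁻¹)
              = r * ((h₀ * r⁻¹ * h₀⁻¹) * s) * (h₀ * r⁻¹ * h₀⁻¹)⁻¹ * r⁻¹ * s⁻¹ by group]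
        rw [hcomm]
        group
      rw [commutatorElement_def, hkey]
      exact hy
  have := main k le_rfl
  rw [hck] at this
  exact this

end PaperDefs
end

section
/- Let G be a finitely generated infinite group such that every proper quotient of G belongs to 𝓜𝓕. Then G admits a proper prodense subgroup if and only if G admits a maximal subgroup of infinite index. -/
open Equiv

/-!
A proper prodense subgroup `H` of an infinite group has infinite index: otherwise its normal core
is a nontrivial normal subgroup `N` with `HN = H`. Since `G` is finitely generated, `H` lies in a
maximal subgroup, which is again prodense, hence of infinite index. Conversely, a maximal subgroup
`M` of infinite index cannot contain a nontrivial normal subgroup `N`, for `M/N` would be a maximal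
subgroup of infinite index in `G/N`; so `MN` properly contains `M`, and `MN = G` by maximality.
-/

namespace Subgroup

variable {G H : Type*} [Group G] [Group H]

theorem isCompactElement_zpowers (g : G) : IsCompactElement (zpowers g) := by
  rw [CompleteLattice.isCompactElement_iff_le_of_directed_sSup_le]
  intro D hne hdir hle
  obtain ⟨K, hK, hg⟩ := (mem_sSup_of_directedOn hne hdir).1 (hle (mem_zpowers g))
  exact ⟨K, hK, zpowers_le.2 hg⟩

theorem closure_finset_eq_sup_zpowers (s : Finset G) : closure (s : Set G) = s.sup zpowers := by
  rw [Finset.sup_eq_iSup, ← Set.biUnion_of_singleton (s : Set G)]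
  simp [closure_iUnion, zpowers_eq_closure]

instance isCoatomic_of_fg [h : Group.FG G] : IsCoatomic (Subgroup G) := by
  obtain ⟨s, hs⟩ := h.out
  apply CompleteLattice.coatomic_of_top_compact
  rw [← hs, closure_finset_eq_sup_zpowers]
  exact CompleteLattice.isCompactElement_finsetSup s fun g _ ↦ isCompactElement_zpowers g

theorem normalCore_ne_bot [Infinite G] (K : Subgroup G) [K.FiniteIndex] : K.normalCore ≠ ⊥ := by
  intro h
  apply K.normalCore.index_ne_zero_of_finite
  rw [h, index_bot, Nat.card_eq_zero_of_infinite]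

theorem isCoatom_of_isCoatom_comap {φ : G →* H} (hφ : Function.Surjective φ) {K : Subgroup H}
    (hK : IsCoatom (K.comap φ)) : IsCoatom K := by
  refine ⟨fun hKtop ↦ hK.1 (by rw [hKtop, comap_top]), fun L hKL ↦ comap_injective hφ ?_⟩
  rw [comap_top]
  exact hK.2 _ ((comap_lt_comap_of_surjective hφ).2 hKL)

theorem isCoatom_map_of_surjective {φ : G →* H} (hφ : Function.Surjective φ) {M : Subgroup G}
    (hker : φ.ker ≤ M) (hM : IsCoatom M) : IsCoatom (M.map φ) :=
  isCoatom_of_isCoatom_comap hφ (by rwa [comap_map_eq_self hker])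

end Subgroup

namespace PaperDefs

variable {G : Type*} [Group G]

theorem Prodense.mono {H K : Subgroup G} (hH : Prodense H) (hHK : H ≤ K) : Prodense K :=
  fun N hN hN₀ ↦ eq_top_mono (sup_le_sup_right hHK N) (hH N hN hN₀)

theorem Prodense.index_eq_zero [Infinite G] {H : Subgroup G} (hH : Prodense H) (hH₁ : H ≠ ⊤) :
    H.index = 0 := by
  by_contra hidx
  have : H.FiniteIndex := ⟨hidx⟩
  apply hH₁
  simpa [sup_eq_left.2 H.normalCore_le] using
    hH _ H.normalCore_normal H.normalCore_ne_bot

theorem prodense_of_isCoatom {M : Subgroup G} (hM : IsCoatom M)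
    (h : ∀ N : Subgroup G, N.Normal → N ≠ ⊥ → ¬N ≤ M) : Prodense M :=
  fun N hN hN₀ ↦ hM.2 _ (left_lt_sup.2 (h N hN hN₀))

theorem QuotientsMF.not_le_of_isCoatom (hQ : QuotientsMF G) {M : Subgroup G} (hM : IsCoatom M)
    (hidx : M.index = 0) (N : Subgroup G) [N.Normal] (hN₀ : N ≠ ⊥) : ¬N ≤ M := by
  intro hNM
  have hker : (QuotientGroup.mk' N).ker ≤ M := by rwa [QuotientGroup.ker_mk']
  refine hQ N hN₀ _ (Subgroup.isCoatom_map_of_surjective (QuotientGroup.mk'_surjective N) hker hM) ?_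
  rw [M.index_map_eq (QuotientGroup.mk'_surjective N) hker, hidx]

/-- A finitely generated infinite group all of whose proper
quotients lie in `𝓜𝓕` admits a proper prodense subgroup if and only if it admits
a maximal subgroup of infinite index. -/
theorem prodense_iff_maximal_of_infinite_index
    (G : Type) [Group G] (hfg : Group.FG G) (hinf : Infinite G)
    (hQ : QuotientsMF G) :
    (∃ H : Subgroup G, H ≠ ⊤ ∧ Prodense H) ↔
      ∃ M : Subgroup G, IsCoatom M ∧ M.index = 0 := by
  constructor
  · rintro ⟨H, hH₁, hH⟩
    obtain ⟨M, hM, hHM⟩ := (eq_top_or_exists_le_coatom H).resolve_left hH₁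
    exact ⟨M, hM, (hH.mono hHM).index_eq_zero hM.1⟩
  · rintro ⟨M, hM, hidx⟩
    exact ⟨M, hM.1, prodense_of_isCoatom hM fun N _ ↦ hQ.not_le_of_isCoatom hM hidx N⟩

end PaperDefs
end
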